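/- The q-trinomial coefficients satisfy T(n, d+1, L) + q^{L-d} T(n+1, d, L) = q^L T(n+1, d+1, L) + q^n T(n, d, L) + (1 - q^n) T(n-1, d, L) for all integers n, d and L ≥ 0. -/

import Mathlib

/- `qq` plays the role of the formal variable `q`, as an element of the
field of rational functions over `ℚ`. -/
noncomputable def qq : RatFunc ℚ := RatFunc.X

/-- `(q)_n = ∏_{i=1}^n (1 - q^i)`. -/
noncomputable def qp (n : ℕ) : RatFunc ℚ := ∏ i ∈ Finset.range n, (1 - qq ^ (i + 1))

/-- `(q)_n` for an integer index, declared to be `0` for negative `n`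
(so that terms with a negative factorial index vanish upon division). -/
noncomputable def qpz (n : ℤ) : RatFunc ℚ := if 0 ≤ n then qp n.toNat else 0

/-- The Andrews–Baxter `q`-trinomial coefficient
`T(n,d,L) = Σ_k q^{k(k+d-n)} (q)_L / ((q)_k (q)_{k+d} (q)_{L-2k-d})`,
where terms with a negative factorial index are zero.  (Any term with a
nonzero contribution has `k ≤ L`, so the range below suffices.) -/
noncomputable def qT (n d : ℤ) (L : ℕ) : RatFunc ℚ :=
  ∑ k ∈ Finset.range (L + 1),
    qq ^ ((k : ℤ) * ((k : ℤ) + d - n)) * qp L /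
      (qp k * qpz ((k : ℤ) + d) * qpz ((L : ℤ) - 2 * k - d))

/-! Write `r m = 1 / (q)_m` for `m ≥ 0` and `r m = 0` for `m < 0`; this is what division by `qpz`
produces. The single recurrence `r (m - 1) = (1 - q^m) r m` then holds for every integer `m`, so
no boundary cases arise. With `t k` the `k`-th summand of `T(n,d,L)` and
`W k = q^n (1 - q^k) t k`, the difference of the two sides of the identity at summation index `k`
is `W (k + 1) - W k`. The sum telescopes, and `W` vanishes at `k = 0` and at `k = L + 1`. -/

open Finset

lemma qq_ne_zero : qq ≠ 0 := RatFunc.X_ne_zero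

lemma one_sub_qq_pow_ne_zero {m : ℕ} (hm : m ≠ 0) : 1 - qq ^ m ≠ 0 := by
  have h := (map_ne_zero_iff _ (RatFunc.algebraMap_injective ℚ)).2
    (Polynomial.X_pow_sub_C_ne_zero (Nat.pos_of_ne_zero hm) (1 : ℚ))
  rw [qq, ← neg_ne_zero, neg_sub]
  simpa using h

lemma qp_ne_zero (m : ℕ) : qp m ≠ 0 :=
  prod_ne_zero_iff.2 fun i _ => one_sub_qq_pow_ne_zero i.succ_ne_zero

lemma qp_succ (m : ℕ) : qp (m + 1) = qp m * (1 - qq ^ (m + 1)) := prod_range_succ _ m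

lemma qpz_natCast (m : ℕ) : qpz m = qp m := by simp [qpz]

lemma qpz_of_neg {m : ℤ} (h : m < 0) : qpz m = 0 := if_neg h.not_ge

lemma inv_qpz_sub_one (m : ℤ) : (qpz (m - 1))⁻¹ = (1 - qq ^ m) * (qpz m)⁻¹ := by
  rcases lt_trichotomy m 0 with hm | rfl | hm
  · rw [qpz_of_neg hm, qpz_of_neg (by omega)]
    simp
  · simp [qpz_of_neg]
  · obtain ⟨j, rfl⟩ : ∃ j : ℕ, m = j + 1 := ⟨(m - 1).toNat, by omega⟩
    have hj : 1 - qq ^ (j + 1) ≠ 0 := one_sub_qq_pow_ne_zero j.succ_ne_zero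
    rw [add_sub_cancel_right, ← Nat.cast_succ, qpz_natCast, qpz_natCast, qp_succ, zpow_natCast]
    field_simp [qp_ne_zero j]

lemma inv_qpz_of_add_one_eq {m m' : ℤ} (h : m + 1 = m') :
    (qpz m)⁻¹ = (1 - qq ^ m') * (qpz m')⁻¹ := by
  rw [← inv_qpz_sub_one, ← h, add_sub_cancel_right]

noncomputable def qTTerm (n d : ℤ) (L k : ℕ) : RatFunc ℚ :=
  qq ^ ((k : ℤ) * ((k : ℤ) + d - n)) * qp L /
    (qp k * qpz ((k : ℤ) + d) * qpz ((L : ℤ) - 2 * k - d))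

lemma qT_eq_sum_qTTerm (n d : ℤ) (L : ℕ) : qT n d L = ∑ k ∈ range (L + 1), qTTerm n d L k := rfl

lemma qTTerm_eq_mul_inv (n d : ℤ) (L k : ℕ) : qTTerm n d L k =
    qq ^ ((k : ℤ) * ((k : ℤ) + d - n)) * qp L *
      ((qpz k)⁻¹ * (qpz ((k : ℤ) + d))⁻¹ * (qpz ((L : ℤ) - 2 * k - d))⁻¹) := by
  rw [qTTerm, qpz_natCast, div_eq_mul_inv, mul_inv, mul_inv]

noncomputable def qTTelescoper (n d : ℤ) (L k : ℕ) : RatFunc ℚ :=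
  qq ^ n * (1 - qq ^ k) * qTTerm n d L k

lemma qTTerm_combined_eq_qTTelescoper_sub (n d : ℤ) (L k : ℕ) :
    qTTerm n (d + 1) L k + qq ^ ((L : ℤ) - d) * qTTerm (n + 1) d L k -
      (qq ^ (L : ℤ) * qTTerm (n + 1) (d + 1) L k + qq ^ n * qTTerm n d L k +
        (1 - qq ^ n) * qTTerm (n - 1) d L k) =
      qTTelescoper n d L (k + 1) - qTTelescoper n d L k := by
  simp only [qTTelescoper, qTTerm_eq_mul_inv]
  have hq := qq_ne_zero
  have quad : ∀ e : ℤ, qq ^ ((k : ℤ) * ((k : ℤ) + d - n) + e) =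
      qq ^ ((k : ℤ) * ((k : ℤ) + d - n)) * qq ^ e := fun e => zpow_add₀ hq _ _
  rw [show (k : ℤ) * ((k : ℤ) + (d + 1) - n) = (k : ℤ) * ((k : ℤ) + d - n) + k by ring,
    show (k : ℤ) * ((k : ℤ) + d - (n + 1)) = (k : ℤ) * ((k : ℤ) + d - n) + -k by ring,
    show (k : ℤ) * ((k : ℤ) + (d + 1) - (n + 1)) = (k : ℤ) * ((k : ℤ) + d - n) + 0 by ring,
    show (k : ℤ) * ((k : ℤ) + d - (n - 1)) = (k : ℤ) * ((k : ℤ) + d - n) + k by ring,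
    show ((k + 1 : ℕ) : ℤ) * (((k + 1 : ℕ) : ℤ) + d - n) =
      (k : ℤ) * ((k : ℤ) + d - n) + (k + k + 1 + d - n) by push_cast; ring]
  simp only [quad]
  generalize qq ^ ((k : ℤ) * ((k : ℤ) + d - n)) = E
  rw [inv_qpz_of_add_one_eq (m := k) (m' := ((k + 1 : ℕ) : ℤ)) (by push_cast; rfl),
    inv_qpz_of_add_one_eq (m := (k : ℤ) + d) (m' := ((k + 1 : ℕ) : ℤ) + d) (by push_cast; ring),
    show (k : ℤ) + (d + 1) = ((k + 1 : ℕ) : ℤ) + d by push_cast; ring,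
    inv_qpz_of_add_one_eq (m := (L : ℤ) - 2 * k - (d + 1)) (m' := (L : ℤ) - 2 * k - d) (by ring),
    inv_qpz_of_add_one_eq (m := (L : ℤ) - 2 * ((k + 1 : ℕ) : ℤ) - d)
      (m' := (L : ℤ) - 2 * k - (d + 1)) (by push_cast; ring),
    inv_qpz_of_add_one_eq (m := (L : ℤ) - 2 * k - (d + 1)) (m' := (L : ℤ) - 2 * k - d) (by ring)]
  generalize (qpz ((k + 1 : ℕ) : ℤ))⁻¹ = r₁
  generalize (qpz (((k + 1 : ℕ) : ℤ) + d))⁻¹ = r₂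
  generalize (qpz ((L : ℤ) - 2 * k - d))⁻¹ = r₃
  -- each term is now `E * qp L * r₁ * r₂ * r₃` times a Laurent polynomial in `qq`
  push_cast
  simp only [zpow_add₀ hq, zpow_sub₀ hq, zpow_neg, zpow_natCast, zpow_zero, zpow_one, two_mul,
    pow_succ]
  field_simp
  ring

lemma qTTerm_eq_zero_of_lt {L k : ℕ} (n d : ℤ) (h : L < k) : qTTerm n d L k = 0 := by
  rcases lt_or_ge ((k : ℤ) + d) 0 with hd | hd
  · rw [qTTerm, qpz_of_neg hd, mul_zero, zero_mul, div_zero]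
  · rw [qTTerm, qpz_of_neg (m := (L : ℤ) - 2 * k - d) (by omega), mul_zero, div_zero]

/-- `T(n,d+1,L) + q^{L-d} T(n+1,d,L)
      = q^L T(n+1,d+1,L) + q^n T(n,d,L) + (1-q^n) T(n-1,d,L)`. -/
theorem qT_combined_identity (n d : ℤ) (L : ℕ) :
    qT n (d + 1) L + qq ^ ((L : ℤ) - d) * qT (n + 1) d L =
      qq ^ (L : ℤ) * qT (n + 1) (d + 1) L + qq ^ n * qT n d L +
        (1 - qq ^ n) * qT (n - 1) d L := by
  rw [← sub_eq_zero]
  calc _ = ∑ k ∈ range (L + 1), (qTTelescoper n d L (k + 1) - qTTelescoper n d L k) := by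
        simp only [qT_eq_sum_qTTerm, mul_sum, ← sum_add_distrib, ← sum_sub_distrib,
          qTTerm_combined_eq_qTTelescoper_sub]
    _ = 0 := by
        rw [sum_range_sub]
        simp [qTTelescoper, qTTerm_eq_zero_of_lt n d L.lt_succ_self]
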